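/- For every integer n ≥ 1, ∑_{j=1}^{n} H_{j,2}/((j+1)(j+2)^2) = 3H_{n,2} − (1/2)H_{n,2}^2 + (1/2)H_{n,4} − 4 − H_{n,2}/(n+2) + 3/(n+1) − H_{n,2}/(n+1)^2 − H_{n,2}/(n+2)^2 + 1/(n+1)^2. Consequently, ∑_{j=1}^{n} H_{j,2}/((j+1)(j+2)^2) → π²/2 − π⁴/120 − 4 as n → ∞. -/

import Mathlib

open Finset Filter Real Topology

/-- Generalized harmonic number `H (n, m) = ∑_{i=1}^{n} 1/i^m` as a real number. -/
noncomputable def H (n m : ℕ) : ℝ := ∑ i ∈ Finset.Icc 1 n, (1 : ℝ) / (i : ℝ) ^ m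

/-- Apéry's constant `ζ(3) = ∑_{k=1}^{∞} 1/k³`. -/
noncomputable def zeta3 : ℝ := ∑' k : ℕ, 1 / ((k : ℝ) + 1) ^ 3

private lemma H_succ' (n m : ℕ) : H (n+1) m = H n m + 1 / ((n:ℝ)+1) ^ m := by
  unfold H
  rw [Finset.sum_Icc_succ_top (by omega)]
  push_cast; ring

private lemma key' (n : ℕ) (hn : 1 ≤ n) :
      ∑ j ∈ Finset.Icc 1 n, H j 2 / (((j : ℝ) + 1) * ((j : ℝ) + 2) ^ 2) =
        3 * H n 2 - (1 / 2) * (H n 2) ^ 2 + (1 / 2) * H n 4 - 4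
          - H n 2 / ((n : ℝ) + 2) + 3 / ((n : ℝ) + 1)
          - H n 2 / ((n : ℝ) + 1) ^ 2 - H n 2 / ((n : ℝ) + 2) ^ 2
          + 1 / ((n : ℝ) + 1) ^ 2 := by
  induction n with
  | zero => omega
  | succ n ih =>
    rcases Nat.eq_or_lt_of_le hn with h | h
    · have : n = 0 := by omega
      subst this
      norm_num [H]
    · have hn1 : 1 ≤ n := by omega
      rw [Finset.sum_Icc_succ_top (by omega), ih hn1]
      rw [H_succ' n 2, H_succ' n 4]
      have h1 : ((n:ℝ)+1) ≠ 0 := by positivity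
      have h2 : ((n:ℝ)+2) ≠ 0 := by positivity
      have h3 : ((n:ℝ)+3) ≠ 0 := by positivity
      push_cast
      field_simp
      ring

private lemma H_range' (n m : ℕ) (hm : 1 ≤ m) :
    H n m = ∑ i ∈ Finset.range (n+1), (1:ℝ)/(i:ℝ)^m := by
  unfold H
  rw [Finset.range_eq_Ico, Finset.sum_eq_sum_Ico_succ_bot (by omega)]
  rw [Nat.cast_zero, zero_pow (by omega), div_zero, zero_add, Finset.Ico_add_one_right_eq_Icc]

private lemma tendsto_H2' : Tendsto (fun n => H n 2) atTop (𝓝 (π^2/6)) := by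
  have := hasSum_zeta_two.tendsto_sum_nat
  have h := this.comp (tendsto_add_atTop_nat 1)
  refine h.congr fun n => ?_
  simp [H_range' n 2 (by norm_num), Function.comp]

private lemma tendsto_H4' : Tendsto (fun n => H n 4) atTop (𝓝 (π^4/90)) := by
  have := hasSum_zeta_four.tendsto_sum_nat
  have h := this.comp (tendsto_add_atTop_nat 1)
  refine h.congr fun n => ?_
  simp [H_range' n 4 (by norm_num), Function.comp]

theorem sum_H2_div_shift1_shift2sq :
    (∀ n : ℕ, 1 ≤ n →
      ∑ j ∈ Finset.Icc 1 n, H j 2 / (((j : ℝ) + 1) * ((j : ℝ) + 2) ^ 2) =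
        3 * H n 2 - (1 / 2) * (H n 2) ^ 2 + (1 / 2) * H n 4 - 4
          - H n 2 / ((n : ℝ) + 2) + 3 / ((n : ℝ) + 1)
          - H n 2 / ((n : ℝ) + 1) ^ 2 - H n 2 / ((n : ℝ) + 2) ^ 2
          + 1 / ((n : ℝ) + 1) ^ 2) ∧
    Tendsto (fun n : ℕ =>
        ∑ j ∈ Finset.Icc 1 n, H j 2 / (((j : ℝ) + 1) * ((j : ℝ) + 2) ^ 2))
      atTop (nhds (π ^ 2 / 2 - π ^ 4 / 120 - 4)) := by
  refine ⟨key', ?_⟩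
  have h2 := tendsto_H2'
  have h4 := tendsto_H4'
  have hz1 : Tendsto (fun n : ℕ => 1/((n:ℝ)+1)) atTop (𝓝 0) :=
    tendsto_one_div_add_atTop_nhds_zero_nat
  have hz2 : Tendsto (fun n : ℕ => 1/((n:ℝ)+2)) atTop (𝓝 0) := by
    have := hz1.comp (tendsto_add_atTop_nat 1)
    refine this.congr fun n => ?_
    simp [Function.comp]
    ring_nf
  have hA : Tendsto (fun n : ℕ =>
      3 * H n 2 - (1/2) * (H n 2)^2 + (1/2) * H n 4 - 4
        - H n 2 * (1/((n:ℝ)+2)) + 3 * (1/((n:ℝ)+1))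
        - H n 2 * ((1/((n:ℝ)+1)) * (1/((n:ℝ)+1)))
        - H n 2 * ((1/((n:ℝ)+2)) * (1/((n:ℝ)+2)))
        + (1/((n:ℝ)+1)) * (1/((n:ℝ)+1))) atTop
      (𝓝 (3 * (π^2/6) - (1/2) * (π^2/6)^2 + (1/2) * (π^4/90) - 4
        - (π^2/6) * 0 + 3 * 0 - (π^2/6) * (0*0) - (π^2/6) * (0*0) + 0*0)) := by
    exact ((((((((h2.const_mul 3).sub ((h2.pow 2).const_mul (1/2))).add
      (h4.const_mul (1/2))).sub_const 4).sub (h2.mul hz2)).add (hz1.const_mul 3)).sub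
      (h2.mul (hz1.mul hz1))).sub (h2.mul (hz2.mul hz2))).add (hz1.mul hz1)
  have hval : (3 * (π^2/6) - (1/2) * (π^2/6)^2 + (1/2) * (π^4/90) - 4
        - (π^2/6) * 0 + 3 * 0 - (π^2/6) * (0*0) - (π^2/6) * (0*0) + 0*0)
      = π ^ 2 / 2 - π ^ 4 / 120 - 4 := by ring
  rw [hval] at hA
  refine hA.congr' ?_
  filter_upwards [eventually_ge_atTop 1] with n hn
  rw [key' n hn]
  have ha : ((n:ℝ)+1) ≠ 0 := by positivity
  have hb : ((n:ℝ)+2) ≠ 0 := by positivity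
  field_simp
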